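/- Suppose the birth–death chain started at k hits 0 with probability 1 and that Σ_{n=1}^{∞} |1/t_n − 1/t_{n−1}| < ∞. Then for every stopping time T with E[T] < ∞, E[X_T] ≤ k + x_k Σ_{n=1}^{∞} |1/t_n − 1/t_{n−1}|; in particular sup over all such stopping times of E[X_T] is finite. -/

import Mathlib

open MeasureTheory Filter Topology Finset
open scoped ENNReal NNReal Classical

/-- Partial products `t_n = (l_1 ⋯ l_n)/(r_1 ⋯ r_n)`, with `t_0 = 1`. -/
noncomputable def tp (l r : ℕ → ℝ) (n : ℕ) : ℝ :=
  (∏ i ∈ Finset.Icc 1 n, l i) / (∏ i ∈ Finset.Icc 1 n, r i)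

/-- `x_n = Σ_{i=0}^{n-1} t_i`. -/
noncomputable def xp (l r : ℕ → ℝ) (n : ℕ) : ℝ :=
  ∑ i ∈ Finset.range n, tp l r i

/-- The natural filtration of the process `X` (σ-algebra generated by `X_0, …, X_m`). -/
def natFilt {Ω : Type*} (X : ℕ → Ω → ℕ) (m : ℕ) : MeasurableSpace Ω :=
  ⨆ i ∈ Finset.range (m + 1), MeasurableSpace.comap (X i) ⊤

/-- A birth–death chain on ℕ started at `k`, with up–probabilities `r n` and
down–probabilities `l n` for states `n ≥ 1`, and `0` absorbing.  The Markov
property is encoded by conditioning on arbitrary events of the natural filtration. -/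
structure IsBDChain {Ω : Type*} [MeasurableSpace Ω] (P : Measure Ω)
    (X : ℕ → Ω → ℕ) (k : ℕ) (l r : ℕ → ℝ) : Prop where
  isProb : IsProbabilityMeasure P
  one_le_k : 1 ≤ k
  l_pos : ∀ n, 1 ≤ n → 0 < l n
  r_pos : ∀ n, 1 ≤ n → 0 < r n
  lr_one : ∀ n, 1 ≤ n → l n + r n = 1
  meas : ∀ m, Measurable (X m)
  init : ∀ᵐ ω ∂P, X 0 ω = k
  absorb : ∀ᵐ ω ∂P, ∀ m, X m ω = 0 → X (m + 1) ω = 0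
  step_up : ∀ m n, 1 ≤ n → ∀ A : Set Ω, MeasurableSet[natFilt X m] A →
    P (A ∩ {ω | X m ω = n ∧ X (m + 1) ω = n + 1}) =
      ENNReal.ofReal (r n) * P (A ∩ {ω | X m ω = n})
  step_down : ∀ m n, 1 ≤ n → ∀ A : Set Ω, MeasurableSet[natFilt X m] A →
    P (A ∩ {ω | X m ω = n ∧ X (m + 1) ω = n - 1}) =
      ENNReal.ofReal (l n) * P (A ∩ {ω | X m ω = n})

/-- A (finite-valued) stopping time for the natural filtration of `X`. -/
def IsBDStop {Ω : Type*} (X : ℕ → Ω → ℕ) (T : Ω → ℕ) : Prop :=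
  ∀ m, MeasurableSet[natFilt X m] {ω | T ω = m}

/-- An extended-ℕ-valued stopping time for the natural filtration of `X`. -/
def IsBDStopE {Ω : Type*} (X : ℕ → Ω → ℕ) (T : Ω → ℕ∞) : Prop :=
  ∀ m : ℕ, MeasurableSet[natFilt X m] {ω | T ω = (m : ℕ∞)}

/-- First hitting time of the set `S ⊆ ℕ` by the path `m ↦ X m ω`, valued in `ℕ∞`. -/
noncomputable def hitTime {Ω : Type*} (X : ℕ → Ω → ℕ) (S : Set ℕ) (ω : Ω) : ℕ∞ :=
  sInf ((fun m : ℕ => (m : ℕ∞)) '' {m | X m ω ∈ S})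

/-- `T_∂`: the first hitting time of `0`, with value `∞` if `0` is never hit. -/
noncomputable def hit0 {Ω : Type*} (X : ℕ → Ω → ℕ) (ω : Ω) : ℕ∞ :=
  hitTime X {0} ω

/-- `G_T^n`: the number of times `m` with `0 ≤ m ≤ T-1` and `X_m = n` (finite `T`). -/
def count {Ω : Type*} (X : ℕ → Ω → ℕ) (n : ℕ) (T : Ω → ℕ) (ω : Ω) : ℕ :=
  ((Finset.range (T ω)).filter fun m => X m ω = n).card

/-- `G_τ^n` for an `ℕ∞`-valued time `τ`, valued in `ℝ≥0∞`. -/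
noncomputable def countE {Ω : Type*} (X : ℕ → Ω → ℕ) (n : ℕ) (τ : Ω → ℕ∞) (ω : Ω) : ℝ≥0∞ :=
  ∑' m : ℕ, if (m : ℕ∞) < τ ω ∧ X m ω = n then 1 else 0

/-!
Summing the increments of the chain up to `T` gives
`E[X_T] = k + ∑ₘ E[X_{m+1} - X_m; m < T]`; the exchange of sum and expectation is dominated
convergence, since `|X_{m+1} - X_m| ≤ 1` and `E[T] < ∞`. On `{X_m = j}` the one-step drift is
`r_j - l_j`, so the `m`-th term is at most `∑_j |r_j - l_j| P(X_m = j)`. The expected number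
of visits to `j` is at most `min(x_k, x_j) / (l_j t_{j-1})`: the function `i ↦ min(x_i, x_j)`
is harmonic for the chain except at `j`, where it loses `l_j t_{j-1}` per visit, so its
expectation along the chain telescopes. Finally `|r_j - l_j| / (l_j t_{j-1}) = |1/t_j - 1/t_{j-1}|`.
-/

section ScaleFunction

variable {l r : ℕ → ℝ}

lemma tp_succ (n : ℕ) : tp l r (n + 1) = tp l r n * (l (n + 1) / r (n + 1)) := by
  simp only [tp, prod_Icc_succ_top (Nat.le_add_left 1 n)]
  ring

lemma tp_pos (hl : ∀ n, 1 ≤ n → 0 < l n) (hr : ∀ n, 1 ≤ n → 0 < r n) (n : ℕ) :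
    0 < tp l r n :=
  div_pos (prod_pos fun i hi => hl i (mem_Icc.mp hi).1)
    (prod_pos fun i hi => hr i (mem_Icc.mp hi).1)

lemma r_mul_tp (hr : ∀ n, 1 ≤ n → 0 < r n) {n : ℕ} (hn : 1 ≤ n) :
    r n * tp l r n = l n * tp l r (n - 1) := by
  obtain ⟨n, rfl⟩ := Nat.exists_eq_add_of_le' hn
  rw [tp_succ, Nat.add_sub_cancel]
  field_simp [(hr (n + 1) hn).ne']

lemma one_div_tp_sub_one_div_tp_pred (hl : ∀ n, 1 ≤ n → 0 < l n)
    (hr : ∀ n, 1 ≤ n → 0 < r n) {n : ℕ} (hn : 1 ≤ n) :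
    1 / tp l r n - 1 / tp l r (n - 1) = (r n - l n) / (l n * tp l r (n - 1)) := by
  obtain ⟨n, rfl⟩ := Nat.exists_eq_add_of_le' hn
  rw [tp_succ, Nat.add_sub_cancel]
  field_simp [(tp_pos hl hr n).ne', (hl (n + 1) hn).ne', (hr (n + 1) hn).ne']

lemma xp_succ (n : ℕ) : xp l r (n + 1) = xp l r n + tp l r n := sum_range_succ _ _

lemma xp_nonneg (hl : ∀ n, 1 ≤ n → 0 < l n) (hr : ∀ n, 1 ≤ n → 0 < r n) (n : ℕ) :
    0 ≤ xp l r n :=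
  sum_nonneg fun i _ => (tp_pos hl hr i).le

lemma xp_mono (hl : ∀ n, 1 ≤ n → 0 < l n) (hr : ∀ n, 1 ≤ n → 0 < r n) :
    Monotone (xp l r) :=
  monotone_nat_of_le_succ fun n => by rw [xp_succ]; linarith [tp_pos hl hr n]

end ScaleFunction

/-- The Green function of the chain killed at `0`: the expected number of visits to `n` when
started from `j`. -/
noncomputable def green (l r : ℕ → ℝ) (n j : ℕ) : ℝ :=
  min (xp l r j) (xp l r n) / (l n * tp l r (n - 1))

section Green

variable {l r : ℕ → ℝ}

lemma green_nonneg (hl : ∀ n, 1 ≤ n → 0 < l n) (hr : ∀ n, 1 ≤ n → 0 < r n) {n : ℕ}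
    (hn : 1 ≤ n) (j : ℕ) : 0 ≤ green l r n j :=
  div_nonneg (le_min (xp_nonneg hl hr j) (xp_nonneg hl hr n))
    (mul_pos (hl n hn) (tp_pos hl hr (n - 1))).le

lemma green_drift (hl : ∀ n, 1 ≤ n → 0 < l n) (hr : ∀ n, 1 ≤ n → 0 < r n)
    {n j : ℕ} (hn : 1 ≤ n) (hj : 1 ≤ j) :
    r j * (green l r n (j + 1) - green l r n j) + l j * (green l r n (j - 1) - green l r n j)
      = -(if j = n then 1 else 0) := by
  obtain ⟨i, rfl⟩ := Nat.exists_eq_add_of_le' hj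
  have hc : l n * tp l r (n - 1) ≠ 0 := (mul_pos (hl n hn) (tp_pos hl hr (n - 1))).ne'
  have hmono := xp_mono hl hr
  have hrt := r_mul_tp (l := l) hr hj
  simp only [green, Nat.add_sub_cancel] at hrt ⊢
  rw [← sub_div, ← sub_div, mul_div_assoc', mul_div_assoc', ← add_div, div_eq_iff hc]
  rcases lt_trichotomy (i + 1) n with h | rfl | h
  · rw [if_neg h.ne, min_eq_left (hmono (by omega)), min_eq_left (hmono (by omega)),
      min_eq_left (hmono (by omega)), xp_succ (i + 1), xp_succ i]
    linear_combination hrt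
  · rw [if_pos rfl, min_eq_right (hmono (by omega)), min_self, min_eq_left (hmono (by omega)),
      xp_succ i, Nat.add_sub_cancel]
    ring
  · rw [if_neg h.ne', min_eq_right (hmono (by omega)), min_eq_right (hmono (by omega)),
      min_eq_right (hmono (by omega))]
    ring

lemma abs_sub_mul_green_le (hl : ∀ n, 1 ≤ n → 0 < l n) (hr : ∀ n, 1 ≤ n → 0 < r n)
    {n : ℕ} (hn : 1 ≤ n) (k : ℕ) :
    |r n - l n| * green l r n k ≤ xp l r k * |1 / tp l r n - 1 / tp l r (n - 1)| := by
  have hc : 0 < l n * tp l r (n - 1) := mul_pos (hl n hn) (tp_pos hl hr (n - 1))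
  rw [one_div_tp_sub_one_div_tp_pred hl hr hn, abs_div, abs_of_pos hc, green, mul_div_assoc',
    mul_div_assoc', mul_comm (xp l r k)]
  gcongr
  exact min_le_left _ _

end Green

section NaturalFiltration

variable {Ω : Type*} {X : ℕ → Ω → ℕ}

lemma natFilt_le [MeasurableSpace Ω] (hX : ∀ m, Measurable (X m)) (m : ℕ) :
    natFilt X m ≤ ‹MeasurableSpace Ω› :=
  iSup₂_le fun i _ => (hX i).comap_le

lemma natFilt_mono : Monotone (natFilt X) := fun _ _ h =>
  biSup_mono fun _ hi => mem_range.mpr ((mem_range.mp hi).trans_le (Nat.succ_le_succ h))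

lemma IsBDStop.measurableSet_lt {T : Ω → ℕ} (hT : IsBDStop X T) (m : ℕ) :
    MeasurableSet[natFilt X m] {ω | m < T ω} := by
  have : {ω | m < T ω} = (⋃ j ∈ range (m + 1), {ω | T ω = j})ᶜ := by
    ext ω
    simp only [Set.mem_ofPred_eq, Set.mem_compl_iff, Set.mem_iUnion, mem_range, exists_prop,
      not_exists, not_and]
    exact ⟨fun h j hj he => by omega, fun h => not_le.mp fun hle => h _ (by omega) rfl⟩
  rw [this]
  exact (Finset.measurableSet_biUnion _ fun j hj =>
    natFilt_mono (Nat.lt_succ_iff.mp (mem_range.mp hj)) _ (hT j)).compl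

lemma IsBDStop.measurable [MeasurableSpace Ω] {T : Ω → ℕ} (hX : ∀ m, Measurable (X m))
    (hT : IsBDStop X T) :
    Measurable T :=
  measurable_to_countable' fun m => natFilt_le hX m _ (hT m)

end NaturalFiltration

lemma hasSum_indicator_lt {α : Type*} (T : α → ℕ) (f : ℕ → α → ℝ) (ω : α) :
    HasSum (fun m => {ω | m < T ω}.indicator (f m) ω) (∑ m ∈ range (T ω), f m ω) := by
  rw [← sum_congr rfl fun m hm =>
    Set.indicator_of_mem (s := {ω | m < T ω}) (mem_range.mp hm) (f m)]
  exact hasSum_sum_of_ne_finset_zero fun m hm => Set.indicator_of_notMem (by simpa using hm) _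

namespace IsBDChain

variable {Ω : Type*} [MeasurableSpace Ω] {P : Measure Ω} {X : ℕ → Ω → ℕ} {k : ℕ}
  {l r : ℕ → ℝ}

lemma measurableSet_X_eq (hC : IsBDChain P X k l r) (m n : ℕ) :
    MeasurableSet {ω | X m ω = n} :=
  hC.meas m (measurableSet_singleton n)

lemma ae_X_succ_of_X_eq (hC : IsBDChain P X k l r) (m : ℕ) {n : ℕ} (hn : 1 ≤ n) :
    ∀ᵐ ω ∂P, X m ω = n → X (m + 1) ω = n + 1 ∨ X (m + 1) ω = n - 1 := by
  have := hC.isProb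
  set E := {ω | X m ω = n}
  set U := {ω | X m ω = n ∧ X (m + 1) ω = n + 1}
  set D := {ω | X m ω = n ∧ X (m + 1) ω = n - 1}
  have hUm : MeasurableSet U :=
    (hC.measurableSet_X_eq m n).inter (hC.measurableSet_X_eq (m + 1) (n + 1))
  have hDm : MeasurableSet D :=
    (hC.measurableSet_X_eq m n).inter (hC.measurableSet_X_eq (m + 1) (n - 1))
  have hU : P U = ENNReal.ofReal (r n) * P E := by
    simpa using hC.step_up m n hn Set.univ MeasurableSet.univ
  have hD : P D = ENNReal.ofReal (l n) * P E := by
    simpa using hC.step_down m n hn Set.univ MeasurableSet.univ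
  have hUD : P (U ∪ D) = P E := by
    have hdisj : Disjoint U D :=
      Set.disjoint_left.mpr fun ω (hωU : ω ∈ U) (hωD : ω ∈ D) => by
        have := hωU.2; have := hωD.2; omega
    rw [measure_union hdisj hDm, hU, hD, ← add_mul,
      ← ENNReal.ofReal_add (hC.r_pos n hn).le (hC.l_pos n hn).le, add_comm, hC.lr_one n hn,
      ENNReal.ofReal_one, one_mul]
  have hbad :
      {ω | ¬(X m ω = n → X (m + 1) ω = n + 1 ∨ X (m + 1) ω = n - 1)} = E \ (U ∪ D) := by
    ext ω
    simp only [E, U, D, Set.mem_ofPred_eq, Set.mem_sdiff, Set.mem_union]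
    tauto
  rw [ae_iff, hbad, measure_sdiff (Set.union_subset (fun _ h => h.1) fun _ h => h.1 : U ∪ D ⊆ E)
    (hUm.union hDm).nullMeasurableSet (measure_ne_top P _), hUD, tsub_self]

lemma ae_step (hC : IsBDChain P X k l r) :
    ∀ᵐ ω ∂P, ∀ m, 1 ≤ X m ω →
      X (m + 1) ω = X m ω + 1 ∨ X (m + 1) ω = X m ω - 1 := by
  rw [ae_all_iff]
  intro m
  filter_upwards [ae_all_iff.mpr fun n => hC.ae_X_succ_of_X_eq m (Nat.le_add_left 1 n)]
    with ω h hpos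
  obtain ⟨n, hn⟩ := Nat.exists_eq_add_of_le' hpos
  rw [hn]
  exact h n hn

lemma ae_X_le (hC : IsBDChain P X k l r) : ∀ᵐ ω ∂P, ∀ m, X m ω ≤ k + m := by
  filter_upwards [hC.init, hC.absorb, hC.ae_step] with ω h0 habs hstep m
  induction m with
  | zero => omega
  | succ m ih =>
    rcases Nat.eq_zero_or_pos (X m ω) with h | h
    · have := habs m h; omega
    · have := hstep m h; omega

lemma ae_abs_X_succ_sub_le_one (hC : IsBDChain P X k l r) :
    ∀ᵐ ω ∂P, ∀ m, |(X (m + 1) ω : ℝ) - X m ω| ≤ 1 := by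
  filter_upwards [hC.absorb, hC.ae_step] with ω habs hstep m
  rw [abs_le]
  rcases Nat.eq_zero_or_pos (X m ω) with h | h
  · simp [h, habs m h]
  · rcases hstep m h with h' | h'
    · rw [h']; push_cast; constructor <;> linarith
    · rw [h', Nat.cast_sub h]; push_cast; constructor <;> linarith

lemma integrable_comp_X (hC : IsBDChain P X k l r) (m : ℕ) (f : ℕ → ℝ) :
    Integrable (fun ω => f (X m ω)) P := by
  have := hC.isProb
  refine .of_bound (measurable_from_nat.comp (hC.meas m)).aestronglyMeasurable
    (∑ i ∈ range (k + m + 1), ‖f i‖) ?_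
  filter_upwards [hC.ae_X_le] with ω hle
  exact single_le_sum (f := fun i => ‖f i‖) (fun _ _ => norm_nonneg _)
    (mem_range.mpr (Nat.lt_succ_of_le (hle m)))

lemma ae_eq_sum_indicator_step (hC : IsBDChain P X k l r) {m N : ℕ} (hN : k + m ≤ N)
    (g : ℕ → ℕ → ℝ) (hg : g 0 0 = 0) :
    ∀ᵐ ω ∂P, g (X m ω) (X (m + 1) ω) = ∑ j ∈ Icc 1 N,
      ({ω | X m ω = j ∧ X (m + 1) ω = j + 1}.indicator (fun _ => g j (j + 1)) ω +
        {ω | X m ω = j ∧ X (m + 1) ω = j - 1}.indicator (fun _ => g j (j - 1)) ω) := by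
  filter_upwards [hC.ae_X_le, hC.ae_step, hC.absorb] with ω hle hstep habs
  simp only [Set.indicator_apply, Set.mem_ofPred_eq]
  rcases Nat.eq_zero_or_pos (X m ω) with h0 | hpos
  · simp only [h0, habs m h0, hg]
    refine (sum_eq_zero fun j hj => ?_).symm
    have := (mem_Icc.mp hj).1
    rw [if_neg (by omega), if_neg (by omega), add_zero]
  · rw [sum_eq_single_of_mem (X m ω) (mem_Icc.mpr ⟨hpos, (hle m).trans hN⟩)
      fun j _ hj => by simp only [Ne.symm hj, false_and, if_false, add_zero]]
    rcases hstep m hpos with h | h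
    · simp only [h, true_and, if_true]
      rw [if_neg (by omega), add_zero]
    · simp only [h, true_and, if_true]
      rw [if_neg (by omega), zero_add]

lemma setIntegral_step_eq_sum (hC : IsBDChain P X k l r) {m N : ℕ} (hN : k + m ≤ N)
    {A : Set Ω} (hA : MeasurableSet[natFilt X m] A) (g : ℕ → ℕ → ℝ) (hg : g 0 0 = 0) :
    ∫ ω in A, g (X m ω) (X (m + 1) ω) ∂P =
      ∑ j ∈ Icc 1 N,
        (r j * g j (j + 1) + l j * g j (j - 1)) * P.real (A ∩ {ω | X m ω = j}) := by
  have := hC.isProb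
  have hAm := natFilt_le hC.meas m A hA
  have hUm (j : ℕ) : MeasurableSet {ω | X m ω = j ∧ X (m + 1) ω = j + 1} :=
    (hC.measurableSet_X_eq m j).inter (hC.measurableSet_X_eq (m + 1) (j + 1))
  have hDm (j : ℕ) : MeasurableSet {ω | X m ω = j ∧ X (m + 1) ω = j - 1} :=
    (hC.measurableSet_X_eq m j).inter (hC.measurableSet_X_eq (m + 1) (j - 1))
  rw [setIntegral_congr_ae hAm ((hC.ae_eq_sum_indicator_step hN g hg).mono fun _ h _ => h),
    integral_finsetSum _ fun j _ =>
      ((integrable_const _).indicator (hUm j)).add ((integrable_const _).indicator (hDm j))]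
  refine sum_congr rfl fun j hj => ?_
  have hj1 := (mem_Icc.mp hj).1
  rw [integral_add ((integrable_const _).indicator (hUm j))
      ((integrable_const _).indicator (hDm j)),
    integral_indicator_const _ (hUm j), integral_indicator_const _ (hDm j),
    measureReal_restrict_apply (hUm j), measureReal_restrict_apply (hDm j),
    Set.inter_comm _ A, Set.inter_comm _ A, measureReal_def, measureReal_def,
    hC.step_up m j hj1 A hA, hC.step_down m j hj1 A hA, ENNReal.toReal_mul, ENNReal.toReal_mul,
    ENNReal.toReal_ofReal (hC.r_pos j hj1).le, ENNReal.toReal_ofReal (hC.l_pos j hj1).le,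
    ← measureReal_def, smul_eq_mul, smul_eq_mul]
  ring

lemma setIntegral_increment_eq_sum (hC : IsBDChain P X k l r) {m N : ℕ} (hN : k + m ≤ N)
    {A : Set Ω} (hA : MeasurableSet[natFilt X m] A) :
    ∫ ω in A, ((X (m + 1) ω : ℝ) - X m ω) ∂P =
      ∑ j ∈ Icc 1 N, (r j - l j) * P.real (A ∩ {ω | X m ω = j}) := by
  refine (hC.setIntegral_step_eq_sum hN hA (fun i i' => (i' : ℝ) - i) (by simp)).trans
    (sum_congr rfl fun j hj => ?_)
  rw [Nat.cast_sub (mem_Icc.mp hj).1]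
  push_cast
  ring

lemma abs_setIntegral_increment_le (hC : IsBDChain P X k l r) {m N : ℕ} (hN : k + m ≤ N)
    {A : Set Ω} (hA : MeasurableSet[natFilt X m] A) :
    |∫ ω in A, ((X (m + 1) ω : ℝ) - X m ω) ∂P| ≤
      ∑ j ∈ Icc 1 N, |r j - l j| * P.real {ω | X m ω = j} := by
  have := hC.isProb
  rw [hC.setIntegral_increment_eq_sum hN hA]
  refine (abs_sum_le_sum_abs _ _).trans (sum_le_sum fun j _ => ?_)
  rw [abs_mul, abs_of_nonneg measureReal_nonneg]
  exact mul_le_mul_of_nonneg_left (measureReal_mono Set.inter_subset_right) (abs_nonneg _)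

lemma integral_green_succ (hC : IsBDChain P X k l r) {n : ℕ} (hn : 1 ≤ n) (m : ℕ) :
    ∫ ω, green l r n (X (m + 1) ω) ∂P =
      ∫ ω, green l r n (X m ω) ∂P - P.real {ω | X m ω = n} := by
  have hdiff := hC.setIntegral_step_eq_sum (m := m) (N := k + m + n) (by omega)
    (A := Set.univ) MeasurableSet.univ (fun i i' => green l r n i' - green l r n i) (sub_self _)
  simp only [Measure.restrict_univ, Set.univ_inter] at hdiff
  rw [integral_sub (hC.integrable_comp_X _ _) (hC.integrable_comp_X _ _)] at hdiff
  have hdrift : ∑ j ∈ Icc 1 (k + m + n), (r j * (green l r n (j + 1) - green l r n j) +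
      l j * (green l r n (j - 1) - green l r n j)) * P.real {ω | X m ω = j} =
      -P.real {ω | X m ω = n} := by
    rw [sum_congr rfl fun j hj => by
      rw [green_drift hC.l_pos hC.r_pos hn (mem_Icc.mp hj).1, neg_mul, ite_mul, one_mul, zero_mul],
      sum_neg_distrib, sum_ite_eq', if_pos (mem_Icc.mpr ⟨hn, by omega⟩)]
  linarith

lemma sum_measureReal_X_eq_le_green (hC : IsBDChain P X k l r) {n : ℕ} (hn : 1 ≤ n) (M : ℕ) :
    ∑ m ∈ range M, P.real {ω | X m ω = n} ≤ green l r n k := by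
  have := hC.isProb
  have hinit : ∫ ω, green l r n (X 0 ω) ∂P = green l r n k := by
    rw [integral_congr_ae (hC.init.mono fun ω h => congrArg (green l r n) h)]
    simp
  have hvisit (m : ℕ) : P.real {ω | X m ω = n} =
      ∫ ω, green l r n (X m ω) ∂P - ∫ ω, green l r n (X (m + 1) ω) ∂P := by
    rw [hC.integral_green_succ hn m, sub_sub_cancel]
  rw [sum_congr rfl fun m _ => hvisit m,
    sum_range_sub' (fun m => ∫ ω, green l r n (X m ω) ∂P), hinit, sub_le_self_iff]
  exact integral_nonneg fun ω => green_nonneg hC.l_pos hC.r_pos hn _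

lemma sum_abs_setIntegral_increment_le (hC : IsBDChain P X k l r)
    (hsum : Summable fun n : ℕ => |1 / tp l r (n + 1) - 1 / tp l r n|) {A : ℕ → Set Ω}
    (hA : ∀ m, MeasurableSet[natFilt X m] (A m)) (M : ℕ) :
    ∑ m ∈ range M, |∫ ω in A m, ((X (m + 1) ω : ℝ) - X m ω) ∂P| ≤
      xp l r k * ∑' n : ℕ, |1 / tp l r (n + 1) - 1 / tp l r n| := by
  calc ∑ m ∈ range M, |∫ ω in A m, ((X (m + 1) ω : ℝ) - X m ω) ∂P|
      ≤ ∑ m ∈ range M, ∑ j ∈ Icc 1 (k + M), |r j - l j| * P.real {ω | X m ω = j} :=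
        sum_le_sum fun m hm =>
          hC.abs_setIntegral_increment_le (by have := mem_range.mp hm; omega) (hA m)
    _ = ∑ j ∈ Icc 1 (k + M), |r j - l j| * ∑ m ∈ range M, P.real {ω | X m ω = j} := by
        rw [sum_comm]
        simp only [mul_sum]
    _ ≤ ∑ j ∈ Icc 1 (k + M), xp l r k * |1 / tp l r j - 1 / tp l r (j - 1)| :=
        sum_le_sum fun j hj => have hj1 := (mem_Icc.mp hj).1
          (mul_le_mul_of_nonneg_left (hC.sum_measureReal_X_eq_le_green hj1 M) (abs_nonneg _)).trans
            (abs_sub_mul_green_le hC.l_pos hC.r_pos hj1 k)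
    _ = xp l r k * ∑ n ∈ range (k + M), |1 / tp l r (n + 1) - 1 / tp l r n| := by
        rw [← mul_sum, ← Ico_add_one_right_eq_Icc, sum_Ico_eq_sum_range, Nat.add_sub_cancel]
        simp only [add_comm 1, Nat.add_sub_cancel]
    _ ≤ xp l r k * ∑' n : ℕ, |1 / tp l r (n + 1) - 1 / tp l r n| :=
        mul_le_mul_of_nonneg_left (hsum.sum_le_tsum _ fun n _ => abs_nonneg _)
          (xp_nonneg hC.l_pos hC.r_pos k)

lemma integrable_X_stopped (hC : IsBDChain P X k l r) {T : Ω → ℕ} (hTm : Measurable T)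
    (hTint : Integrable (fun ω => (T ω : ℝ)) P) :
    Integrable (fun ω => (X (T ω) ω : ℝ)) P := by
  have := hC.isProb
  have hXTm : Measurable fun ω => X (T ω) ω :=
    (measurable_from_prod_countable_right (f := fun p : ℕ × Ω => X p.1 p.2) hC.meas).comp
      (hTm.prodMk measurable_id)
  refine ((integrable_const (k : ℝ)).add hTint).mono'
    (measurable_from_nat.comp hXTm).aestronglyMeasurable ?_
  filter_upwards [hC.ae_X_le] with ω hle
  simpa using (Nat.cast_le (α := ℝ)).mpr (hle (T ω))

lemma integral_X_stopped_eq (hC : IsBDChain P X k l r) {T : Ω → ℕ} (hT : IsBDStop X T)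
    (hTi : ∫⁻ ω, (T ω : ℝ≥0∞) ∂P < ⊤) :
    ∫ ω, (X (T ω) ω : ℝ) ∂P =
      k + ∑' m, ∫ ω in {ω | m < T ω}, ((X (m + 1) ω : ℝ) - X m ω) ∂P := by
  have := hC.isProb
  have hTm := hT.measurable hC.meas
  have hTint : Integrable (fun ω => (T ω : ℝ)) P := by
    simpa using integrable_toReal_of_lintegral_ne_top
      (measurable_from_nat.comp hTm).aemeasurable hTi.ne
  have hA (m : ℕ) : MeasurableSet {ω | m < T ω} :=
    natFilt_le hC.meas m _ (hT.measurableSet_lt m)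
  have hmeas (m : ℕ) : AEStronglyMeasurable
      ({ω | m < T ω}.indicator fun ω => ((X (m + 1) ω : ℝ) - X m ω)) P :=
    (((measurable_from_nat.comp (hC.meas (m + 1))).sub
      (measurable_from_nat.comp (hC.meas m))).indicator (hA m)).aestronglyMeasurable
  have hbound (m : ℕ) : ∀ᵐ ω ∂P,
      ‖{ω | m < T ω}.indicator (fun ω => ((X (m + 1) ω : ℝ) - X m ω)) ω‖ ≤
        {ω | m < T ω}.indicator 1 ω := by
    filter_upwards [hC.ae_abs_X_succ_sub_le_one] with ω h
    rw [norm_indicator_eq_indicator_norm]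
    exact Set.indicator_le_indicator (h m)
  have hsum := hasSum_integral_of_dominated_convergence (f := fun ω => (X (T ω) ω : ℝ) - k)
    _ hmeas hbound (.of_forall fun ω => (hasSum_indicator_lt T _ ω).summable)
    (hTint.congr (.of_forall fun ω => by simp [(hasSum_indicator_lt T _ ω).tsum_eq]))
    (hC.init.mono fun ω h0 => by
      have := hasSum_indicator_lt T (fun m ω => (X (m + 1) ω : ℝ) - X m ω) ω
      rwa [sum_range_sub (fun m => (X m ω : ℝ)), h0] at this)
  simp only [integral_indicator (hA _)] at hsum
  rw [hsum.tsum_eq, integral_sub (hC.integrable_X_stopped hTm hTint) (integrable_const _)]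
  simp

end IsBDChain

theorem stmt14_general {Ω : Type*} [MeasurableSpace Ω] (P : Measure Ω) (X : ℕ → Ω → ℕ)
    (k : ℕ) (l r : ℕ → ℝ) (hC : IsBDChain P X k l r)
    (hsum : Summable fun n : ℕ => |1 / tp l r (n + 1) - 1 / tp l r n|) :
    (∀ T : Ω → ℕ, IsBDStop X T → ∫⁻ ω, (T ω : ℝ≥0∞) ∂P < ⊤ →
      ∫ ω, (X (T ω) ω : ℝ) ∂P ≤
        k + xp l r k * ∑' n : ℕ, |1 / tp l r (n + 1) - 1 / tp l r n|) ∧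
    BddAbove {y : ℝ | ∃ T : Ω → ℕ, IsBDStop X T ∧
      (∫⁻ ω, (T ω : ℝ≥0∞) ∂P < ⊤) ∧ y = ∫ ω, (X (T ω) ω : ℝ) ∂P} := by
  have bound (T : Ω → ℕ) (hT : IsBDStop X T)
      (hTi : ∫⁻ ω, (T ω : ℝ≥0∞) ∂P < ⊤) :
      ∫ ω, (X (T ω) ω : ℝ) ∂P ≤
        k + xp l r k * ∑' n : ℕ, |1 / tp l r (n + 1) - 1 / tp l r n| := by
    have hpartial := hC.sum_abs_setIntegral_increment_le hsum hT.measurableSet_lt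
    have habs := summable_of_sum_range_le (fun _ => abs_nonneg _) hpartial
    rw [hC.integral_X_stopped_eq hT hTi, add_le_add_iff_left]
    exact (habs.of_abs.tsum_le_tsum (fun m => le_abs_self _) habs).trans
      (Real.tsum_le_of_sum_range_le (fun _ => abs_nonneg _) hpartial)
  exact ⟨bound, _, fun y ⟨T, hT, hTi, hy⟩ => hy ▸ bound T hT hTi⟩

/-- If the chain hits `0` a.s. and `Σ_{n=1}^∞ |1/t_n - 1/t_{n-1}| < ∞`,
then for every stopping time `T` with `E[T] < ∞`,
`E[X_T] ≤ k + x_k Σ_{n=1}^∞ |1/t_n - 1/t_{n-1}|`; in particular the supremum of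
`E[X_T]` over all such stopping times is finite. -/
theorem stmt14 {Ω : Type*} [MeasurableSpace Ω] (P : Measure Ω) (X : ℕ → Ω → ℕ)
    (k : ℕ) (l r : ℕ → ℝ) (hC : IsBDChain P X k l r)
    (hone : P {ω | ∃ m : ℕ, X m ω = 0} = 1)
    (hsum : Summable fun n : ℕ => |1 / tp l r (n + 1) - 1 / tp l r n|) :
    (∀ T : Ω → ℕ, IsBDStop X T → ∫⁻ ω, (T ω : ℝ≥0∞) ∂P < ⊤ →
      ∫ ω, (X (T ω) ω : ℝ) ∂P ≤
        k + xp l r k * ∑' n : ℕ, |1 / tp l r (n + 1) - 1 / tp l r n|) ∧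
    BddAbove {y : ℝ | ∃ T : Ω → ℕ, IsBDStop X T ∧
      (∫⁻ ω, (T ω : ℝ≥0∞) ∂P < ⊤) ∧ y = ∫ ω, (X (T ω) ω : ℝ) ∂P} :=
  stmt14_general P X k l r hC hsum
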